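/- Let R be a commutative Noetherian ring, and let G be an object of D^b(mod R) such that for every prime p the localization G_p finitely builds (lies in the thick subcategory generated by) the residue-field Koszul object; if moreover G is a classical generator of D^b(mod R) and M is any finitely generated R-module, then M ⊗^L_R K(p) ∈ ⟨G_p⟩ in D^b(mod R_p) for every prime p. -/

import Mathlib

open CategoryTheory Limits Pretriangulated

universe v u

variable (C : Type u) [Category.{v} C] [HasZeroObject C] [HasShift C ℤ]
  [Preadditive C] [∀ n : ℤ, (shiftFunctor C n).Additive] [Pretriangulated C]
  [HasBinaryBiproducts C]

/-- `X` is a retract of `Y`. -/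
def IsRetractOf {C : Type u} [Category.{v} C] (X Y : C) : Prop :=
  ∃ (i : X ⟶ Y) (r : Y ⟶ X), i ≫ r = 𝟙 X

/-- `add S`: the smallest class containing `S` closed under shifts, finite
coproducts and retracts (in particular isomorphisms and zero objects). -/
inductive AddClosure (S : Set C) : Set C
  | of {X : C} : X ∈ S → AddClosure S X
  | zero {X : C} : IsZero X → AddClosure S X
  | shift {X : C} (n : ℤ) : AddClosure S X → AddClosure S (X⟦n⟧)
  | sum {X Y : C} : AddClosure S X → AddClosure S Y → AddClosure S (X ⊞ Y)
  | retract {X Y : C} : AddClosure S Y → IsRetractOf X Y → AddClosure S X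

/-- The Bondal–Van den Bergh filtration `⟨S⟩ₙ`. -/
def Lvl (S : Set C) : ℕ → Set C
  | 0 => {X : C | IsZero X}
  | 1 => AddClosure C S
  | (n + 2) => AddClosure C
      {E : C | ∃ (A B : C) (f : A ⟶ B) (g : B ⟶ E) (h : E ⟶ A⟦(1 : ℤ)⟧),
        A ∈ Lvl S (n + 1) ∧ B ∈ AddClosure C S ∧
        Triangle.mk f g h ∈ distTriang C}

/-- The smallest thick subcategory `⟨S⟩` containing `S`. -/
inductive ThickClosure (S : Set C) : Set C
  | of {X : C} : X ∈ S → ThickClosure S X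
  | zero {X : C} : IsZero X → ThickClosure S X
  | shift {X : C} (n : ℤ) : ThickClosure S X → ThickClosure S (X⟦n⟧)
  | ext {A E B : C} (f : A ⟶ E) (g : E ⟶ B) (h : B ⟶ A⟦(1 : ℤ)⟧) :
      (Triangle.mk f g h ∈ distTriang C) →
      ThickClosure S A → ThickClosure S B → ThickClosure S E
  | retract {X Y : C} : ThickClosure S Y → IsRetractOf X Y → ThickClosure S X

/-- The star product `S₁ ⋆ S₂` of two classes of objects. -/
def StarProd (S₁ S₂ : Set C) : Set C :=
  {E : C | ∃ (A B : C) (f : A ⟶ E) (g : E ⟶ B) (h : B ⟶ A⟦(1 : ℤ)⟧),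
    A ∈ S₁ ∧ B ∈ S₂ ∧ Triangle.mk f g h ∈ distTriang C}


noncomputable instance (S : Type) [CommRing S] : HasDerivedCategory (ModuleCat.{0} S) :=
  HasDerivedCategory.standard _

/-- A bounded complex of finitely generated modules: a model for an object of
`D^b(mod R)`. -/
def IsBddFg (R : Type) [CommRing R] (E : CochainComplex (ModuleCat R) ℤ) : Prop :=
  (∃ a b : ℤ, ∀ n : ℤ, (n < a ∨ b < n) → IsZero (E.X n)) ∧
  ∀ n : ℤ, Module.Finite R (E.X n)

/-- The iterated-mapping-cone model for `E ⊗^L K(x₁, …, x_c)`: tensoring with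
the Koszul complex on `x₁, …, x_c` is, up to isomorphism in the derived
category, the `c`-fold iterated mapping cone of multiplication by the `xᵢ`.
In particular `koszulTensor R c x` applied to `R` (in degree `0`) is the Koszul
complex `K(x₁, …, x_c)` itself. -/
noncomputable def koszulTensor (R : Type) [CommRing R] :
    (c : ℕ) → (Fin c → R) → CochainComplex (ModuleCat R) ℤ →
      CochainComplex (ModuleCat R) ℤ
  | 0, _, E => E
  | (c + 1), x, E =>
      CochainComplex.mappingCone
        ((x (Fin.last c)) • 𝟙 (koszulTensor R c (fun i => x i.castSucc) E))

/-- `x₁, …, x_c` is a minimal generating set of the maximal ideal of the local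
ring `A`. -/
def MinGens (A : Type) [CommRing A] [IsLocalRing A] (c : ℕ) (x : Fin c → A) : Prop :=
  Ideal.span (Set.range x) = IsLocalRing.maximalIdeal A ∧
  ∀ s : Set A, s ⊆ Set.range x → Ideal.span s = IsLocalRing.maximalIdeal A →
    s = Set.range x

instance extendScalarsAdditive (R S : Type) [CommRing R] [CommRing S] (f : R →+* S) :
    (ModuleCat.extendScalars f).Additive where
  map_add {M N g h} := by
    letI : Algebra R S := ((algebraMap S S).comp f).toAlgebra
    apply ModuleCat.hom_ext
    exact LinearMap.baseChange_add _ _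

/-- The localization `G_p` of a complex `G` over `R` at a prime `p`, as an
object of the derived category of `R_p`-modules. -/
noncomputable def localizeAt (R : Type) [CommRing R] (p : PrimeSpectrum R)
    (G : CochainComplex (ModuleCat R) ℤ) :
    DerivedCategory (ModuleCat (Localization.AtPrime p.asIdeal)) :=
  DerivedCategory.Q.obj
    (((ModuleCat.extendScalars
        (algebraMap R (Localization.AtPrime p.asIdeal))).mapHomologicalComplex
      (ComplexShape.up ℤ)).obj G)

/-
The generator hypothesis puts `M` in `⟨G⟩`. Localization at `p` is exact, so it induces a
triangulated functor on derived categories carrying `⟨G⟩` into `⟨G_p⟩`; hence `M_p ∈ ⟨G_p⟩`.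
Finally `M_p ⊗^L K(p)` is an iterated mapping cone built from `M_p`, and thick subcategories are
closed under mapping cones.
-/

namespace ThickClosure

variable {D : Type*} [Category D] [HasZeroObject D] [HasShift D ℤ]
  [Preadditive D] [∀ n : ℤ, (shiftFunctor D n).Additive] [Pretriangulated D]

lemma of_iso {S : Set D} {X Y : D} (e : X ≅ Y) (h : Y ∈ ThickClosure D S) :
    X ∈ ThickClosure D S :=
  retract h ⟨e.hom, e.inv, e.hom_inv_id⟩

lemma map_obj {D' : Type*} [Category D'] [HasZeroObject D'] [HasShift D' ℤ]
    [Preadditive D'] [∀ n : ℤ, (shiftFunctor D' n).Additive] [Pretriangulated D']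
    (F : D ⥤ D') [F.CommShift ℤ] [F.IsTriangulated] {S : Set D} {T : Set D'}
    (hS : ∀ A ∈ S, F.obj A ∈ ThickClosure D' T) {X : D} (hX : X ∈ ThickClosure D S) :
    F.obj X ∈ ThickClosure D' T := by
  induction hX with
  | of hA => exact hS _ hA
  | zero hZ => exact zero (F.map_isZero hZ)
  | shift n _ ih => exact of_iso ((F.commShiftIso n).app _) (shift n ih)
  | ext f g h hT _ _ ihA ihB =>
    exact ext (F.map f) (F.map g) (F.map h ≫ (F.commShiftIso (1 : ℤ)).hom.app _)
      (F.map_distinguished _ hT) ihA ihB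
  | retract _ hXY ih =>
    obtain ⟨i, r, hir⟩ := hXY
    exact retract ih ⟨F.map i, F.map r, by rw [← F.map_comp, hir, F.map_id]⟩

end ThickClosure

section DerivedCategory

variable {C : Type*} [Category C] [Abelian C] [HasDerivedCategory C]
  {S : Set (DerivedCategory C)}

lemma ThickClosure.Q_obj_mappingCone {X Y : CochainComplex C ℤ} (f : X ⟶ Y)
    (hX : DerivedCategory.Q.obj X ∈ ThickClosure _ S)
    (hY : DerivedCategory.Q.obj Y ∈ ThickClosure _ S) :
    DerivedCategory.Q.obj (CochainComplex.mappingCone f) ∈ ThickClosure _ S := by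
  have hT : DerivedCategory.Q.mapTriangle.obj (CochainComplex.mappingCone.triangle f) ∈
      distTriang (DerivedCategory C) :=
    (DerivedCategory.mem_distTriang_iff _).2 ⟨X, Y, f, ⟨Iso.refl _⟩⟩
  exact ThickClosure.ext _ _ _ (rot_of_distTriang _ hT) hY (ThickClosure.shift 1 hX)

end DerivedCategory

lemma ThickClosure.Q_obj_koszulTensor {A : Type} [CommRing A]
    {S : Set (DerivedCategory (ModuleCat A))} :
    ∀ (c : ℕ) (x : Fin c → A) {E : CochainComplex (ModuleCat A) ℤ},
      DerivedCategory.Q.obj E ∈ ThickClosure _ S →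
      DerivedCategory.Q.obj (koszulTensor A c x E) ∈ ThickClosure _ S
  | 0, _, _, hE => hE
  | c + 1, x, _, hE =>
    have ih := Q_obj_koszulTensor c (fun i => x i.castSucc) hE
    Q_obj_mappingCone _ ih ih

lemma isBddFg_single_obj_zero (R : Type) [CommRing R] (M : ModuleCat R) [Module.Finite R M] :
    IsBddFg R ((HomologicalComplex.single (ModuleCat R) (ComplexShape.up ℤ) 0).obj M) := by
  refine ⟨⟨0, 0, fun n hn => HomologicalComplex.isZero_single_obj_X _ _ _ _ (by omega)⟩,
    fun n => ?_⟩
  by_cases hn : n = 0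
  · subst hn
    exact Module.Finite.equiv
      (HomologicalComplex.singleObjXSelf (ComplexShape.up ℤ) 0 M).toLinearEquiv.symm
  · have hZ := HomologicalComplex.isZero_single_obj_X (ComplexShape.up ℤ) 0 M n hn
    exact Module.Finite.equiv
      (hZ.iso (ModuleCat.isZero_of_subsingleton (ModuleCat.of R PUnit))).symm.toLinearEquiv

section Localization

variable (R : Type) [CommRing R] (p : PrimeSpectrum R)

-- Exactness of localization; preservation of finite colimits is automatic, as `extendScalars` is a
-- left adjoint.
instance : PreservesFiniteLimits
    (ModuleCat.extendScalars.{0, 0, 0} (algebraMap R (Localization.AtPrime p.asIdeal))) :=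
  ModuleCat.preservesFiniteLimits_extendScalars_of_flat
    (RingHom.flat_algebraMap_iff.mpr inferInstance)

lemma localizeAt_mem_thickClosure {G E : CochainComplex (ModuleCat R) ℤ}
    (hE : DerivedCategory.Q.obj E ∈ ThickClosure _ {DerivedCategory.Q.obj G}) :
    localizeAt R p E ∈ ThickClosure _ {localizeAt R p G} := by
  let F := ModuleCat.extendScalars (algebraMap R (Localization.AtPrime p.asIdeal))
  have hG : F.mapDerivedCategory.obj (DerivedCategory.Q.obj G) ∈
      ThickClosure _ {localizeAt R p G} :=
    ThickClosure.of_iso (F.mapDerivedCategoryFactors.app G) (ThickClosure.of rfl)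
  exact ThickClosure.of_iso (F.mapDerivedCategoryFactors.app E).symm
    (ThickClosure.map_obj F.mapDerivedCategory (by rintro _ rfl; exact hG) hE)

noncomputable def singleLocalizeAtIso (M : ModuleCat R) :
    DerivedCategory.Q.obj ((HomologicalComplex.single _ (ComplexShape.up ℤ) 0).obj
        ((ModuleCat.extendScalars (algebraMap R (Localization.AtPrime p.asIdeal))).obj M)) ≅
      localizeAt R p ((HomologicalComplex.single _ (ComplexShape.up ℤ) 0).obj M) :=
  DerivedCategory.Q.mapIso
    ((HomologicalComplex.singleMapHomologicalComplex _ (ComplexShape.up ℤ) 0).app M).symm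

end Localization

theorem stmt_19_general (R : Type) [CommRing R]
    (G : CochainComplex (ModuleCat R) ℤ)
    (hgen : ∀ E : CochainComplex (ModuleCat R) ℤ, IsBddFg R E →
      DerivedCategory.Q.obj E ∈
        ThickClosure (DerivedCategory (ModuleCat R)) {DerivedCategory.Q.obj G})
    (M : Type) [AddCommGroup M] [Module R M] [Module.Finite R M] :
    ∀ (p : PrimeSpectrum R) (c : ℕ) (x : Fin c → Localization.AtPrime p.asIdeal),
      MinGens _ c x →
      DerivedCategory.Q.obj
          (koszulTensor _ c x
            ((HomologicalComplex.single (ModuleCat (Localization.AtPrime p.asIdeal))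
                (ComplexShape.up ℤ) 0).obj
              ((ModuleCat.extendScalars
                  (algebraMap R (Localization.AtPrime p.asIdeal))).obj
                (ModuleCat.of R M)))) ∈
        ThickClosure (DerivedCategory (ModuleCat (Localization.AtPrime p.asIdeal)))
          {localizeAt R p G} := by
  intro p c x _
  have hM : DerivedCategory.Q.obj
      ((HomologicalComplex.single _ (ComplexShape.up ℤ) 0).obj (ModuleCat.of R M)) ∈
        ThickClosure _ {DerivedCategory.Q.obj G} :=
    hgen _ (isBddFg_single_obj_zero R (ModuleCat.of R M))
  exact ThickClosure.Q_obj_koszulTensor c x (ThickClosure.of_iso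
    (singleLocalizeAtIso R p _) (localizeAt_mem_thickClosure R p hM))

/-- If `G ∈ D^b(mod R)` is such that for every prime `p` the localization `G_p`
finitely builds the residue-field Koszul object `K(p)` (the Koszul complex on a
minimal generating set of the maximal ideal of `R_p`), and `G` is a classical
generator of `D^b(mod R)`, then for every finitely generated `R`-module `M` and
every prime `p`, `M ⊗^L K(p)` (realized as the iterated mapping cone
`koszulTensor _ c x` applied to `M_p`) lies in `⟨G_p⟩`. -/
theorem stmt_19 (R : Type) [CommRing R] [IsNoetherianRing R]
    (G : CochainComplex (ModuleCat R) ℤ) (hGbdd : IsBddFg R G)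
    (hKoszul : ∀ (p : PrimeSpectrum R) (c : ℕ)
      (x : Fin c → Localization.AtPrime p.asIdeal),
      MinGens _ c x →
      DerivedCategory.Q.obj
          (koszulTensor _ c x
            ((HomologicalComplex.single (ModuleCat (Localization.AtPrime p.asIdeal))
                (ComplexShape.up ℤ) 0).obj
              (ModuleCat.of _ (Localization.AtPrime p.asIdeal)))) ∈
        ThickClosure (DerivedCategory (ModuleCat (Localization.AtPrime p.asIdeal)))
          {localizeAt R p G})
    (hgen : ∀ E : CochainComplex (ModuleCat R) ℤ, IsBddFg R E →
      DerivedCategory.Q.obj E ∈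
        ThickClosure (DerivedCategory (ModuleCat R)) {DerivedCategory.Q.obj G})
    (M : Type) [AddCommGroup M] [Module R M] [Module.Finite R M] :
    ∀ (p : PrimeSpectrum R) (c : ℕ) (x : Fin c → Localization.AtPrime p.asIdeal),
      MinGens _ c x →
      DerivedCategory.Q.obj
          (koszulTensor _ c x
            ((HomologicalComplex.single (ModuleCat (Localization.AtPrime p.asIdeal))
                (ComplexShape.up ℤ) 0).obj
              ((ModuleCat.extendScalars
                  (algebraMap R (Localization.AtPrime p.asIdeal))).obj
                (ModuleCat.of R M)))) ∈
        ThickClosure (DerivedCategory (ModuleCat (Localization.AtPrime p.asIdeal)))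
          {localizeAt R p G} :=
  stmt_19_general R G hgen M
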